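/- Let c be a consistent map and μ the induced charge on the ring R of compact open subsets of Y. For every α in the group of algebraic numbers modulo roots of unity, the function f_α(y) = log‖α‖_y has support in R, is a simple function with respect to R (constant on the sets Y(K,v) for any number field K containing a representative of α), and its integral equals Φ_c(α) = Σ_{v ∈ M_K} c(K,v) log‖α‖_v. -/

import Mathlib

/-- Abstract axiomatization of the space `Y` of all places of `\overline{ℚ}`: a directed
system `F` of number fields (ordered by field extension `le`), the places `Pl K` of each
number field, the map `over` sending a place `w` of `L` to the place of `K` it divides, and
the basic compact open sets `Y(K,v) = {y ∈ Y : y ∣ v}` forming a basis of the totally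
disconnected Hausdorff topology on `Y`. -/
structure PlaceSystem where
  /-- the number fields -/
  F : Type
  /-- `le K L` means `L/K` is a (finite) field extension -/
  le : F → F → Prop
  le_refl : ∀ K, le K K
  /-- any two number fields admit a compositum -/
  directed : ∀ K L, ∃ M, le K M ∧ le L M
  /-- the places of a number field -/
  Pl : F → Type
  /-- `over h w` is the unique place of `K` divided by the place `w` of `L` -/
  overPl : ∀ {K L : F}, le K L → Pl L → Pl K
  /-- only finitely many places of `L` divide a given place of `K` -/
  finiteFibers : ∀ {K L : F} (h : le K L) (v : Pl K), {w : Pl L | overPl h w = v}.Finite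
  /-- the set of places of `\overline{ℚ}` -/
  Y : Type
  top : TopologicalSpace Y
  t2 : @T2Space Y top
  /-- the basic set `Y(K,v)` of places of `\overline{ℚ}` dividing `v` -/
  Yset : (K : F) → Pl K → Set Y
  Yset_nonempty : ∀ (K : F) (v : Pl K), (Yset K v).Nonempty
  Yset_compact : ∀ (K : F) (v : Pl K), @IsCompact Y top (Yset K v)
  Yset_open : ∀ (K : F) (v : Pl K), @IsOpen Y top (Yset K v)
  Yset_disjoint : ∀ (K : F) (v w : Pl K), v ≠ w → Disjoint (Yset K v) (Yset K w)
  /-- `Y(K,v)` is the disjoint union of the `Y(L,w)` over the places `w ∣ v` of `L` -/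
  Yset_decomp : ∀ {K L : F} (h : le K L) (v : Pl K),
    Yset K v = ⋃ w ∈ {w : Pl L | overPl h w = v}, Yset L w
  basis : @TopologicalSpace.IsTopologicalBasis Y top
    {A : Set Y | ∃ (K : F) (v : Pl K), A = Yset K v}
  cover : (⋃ (K : F) (v : Pl K), Yset K v) = Set.univ
  noncompact : ¬ @IsCompact Y top Set.univ

/-- A map `c` on pairs `(K,v)` is consistent if `c(K,v) = Σ_{w ∣ v} c(L,w)` for every finite
extension `L/K`. -/
def PlaceSystem.Consistent (S : PlaceSystem) (c : ∀ K : S.F, S.Pl K → ℝ) : Prop :=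
  ∀ {K L : S.F} (h : S.le K L) (v : S.Pl K),
    c K v = ∑ᶠ (w : S.Pl L) (_ : S.overPl h w = v), c L w

/-- `R`, the smallest ring of sets on `Y` containing all the basic sets `Y(K,v)`. -/
def PlaceSystem.ringR (S : PlaceSystem) : Set (Set S.Y) :=
  ⋂₀ {R : Set (Set S.Y) |
    MeasureTheory.IsSetRing R ∧ ∀ (K : S.F) (v : S.Pl K), S.Yset K v ∈ R}

/-- A charge on `R`: a finitely additive real-valued set function vanishing on `∅`. -/
def PlaceSystem.IsCharge (S : PlaceSystem) (μ : Set S.Y → ℝ) : Prop :=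
  μ ∅ = 0 ∧ ∀ A ∈ S.ringR, ∀ B ∈ S.ringR, Disjoint A B → μ (A ∪ B) = μ A + μ B

/-! The values of `f` on the basic sets of a larger field `L` are those on the basic sets of `K`
pulled back along `w ↦ w ∣ K`, because `Y(L,w) ⊆ Y(K, w ∣ K)` and every `Y(L,w)` is nonempty.
Grouping the sum over the places of `L` fibre by fibre and using consistency
`c(K,v) = Σ_{w ∣ v} c(L,w)` then turns it into the sum over the places of `K`.
The support of `f` is the finite union of the `Y(K,v)` with `val v ≠ 0`, hence lies in `R`. -/

open Function

theorem finsum_eq_finsum_fiberwise {α β M : Type*} [AddCommMonoid M] (p : β → α) {F : β → M}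
    (hF : (support F).Finite) : ∑ᶠ b, F b = ∑ᶠ (a) (b) (_ : p b = a), F b := by
  classical
  set s := hF.toFinset
  have hfiber (a : α) : ∑ᶠ (b) (_ : p b = a), F b = ∑ b ∈ s with p b = a, F b := by
    rw [← finsum_mem_coe_finset]
    exact finsum_mem_inter_support_eq' F _ _ fun b hb => by simp [s, mem_support.1 hb]; rfl
  simp_rw [hfiber]
  rw [finsum_eq_sum_of_support_subset F (s := s) (by simp [s]),
    finsum_eq_sum_of_support_subset _ (s.support_of_fiberwise_sum_subset_image F p),
    Finset.sum_fiberwise_of_maps_to fun b hb => Finset.mem_image_of_mem p hb]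

namespace PlaceSystem

variable (S : PlaceSystem)

theorem biUnion_Yset_mem_ringR {K : S.F} {s : Set (S.Pl K)} (hs : s.Finite) :
    ⋃ v ∈ s, S.Yset K v ∈ S.ringR := by
  refine Set.mem_sInter.2 fun R hR => ?_
  simpa using hR.1.biUnion_mem hs.toFinset fun v _ => hR.2 K v

variable {S}

theorem Yset_subset_Yset_overPl {K L : S.F} (h : S.le K L) (w : S.Pl L) :
    S.Yset L w ⊆ S.Yset K (S.overPl h w) := by
  rw [S.Yset_decomp h]
  exact Set.subset_biUnion_of_mem (u := fun w => S.Yset L w) rfl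

theorem support_eq_biUnion_Yset {M : Type*} [Zero M] {f : S.Y → M} {K : S.F} {val : S.Pl K → M}
    (hval : ∀ v, ∀ y ∈ S.Yset K v, f y = val v)
    (hsupp : ∀ y, f y ≠ 0 → ∃ v, y ∈ S.Yset K v) :
    support f = ⋃ v ∈ support val, S.Yset K v := by
  ext y
  simp only [mem_support, Set.mem_iUnion, exists_prop]
  constructor
  · intro hy
    obtain ⟨v, hv⟩ := hsupp y hy
    exact ⟨v, hval v y hv ▸ hy, hv⟩
  · rintro ⟨v, hv0, hv⟩
    rwa [hval v y hv]

theorem eq_comp_overPl_of_eqOn_Yset {β : Type*} {f : S.Y → β} {K L : S.F} (h : S.le K L)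
    {val : S.Pl K → β} {valL : S.Pl L → β}
    (hval : ∀ v, ∀ y ∈ S.Yset K v, f y = val v) (hvalL : ∀ w, ∀ y ∈ S.Yset L w, f y = valL w) :
    valL = val ∘ S.overPl h := by
  funext w
  obtain ⟨y, hy⟩ := S.Yset_nonempty L w
  rw [← hvalL w y hy, comp_apply, hval _ y (Yset_subset_Yset_overPl h w hy)]

theorem Consistent.finsum_mul_comp_overPl {c : ∀ K : S.F, S.Pl K → ℝ} (hc : S.Consistent c)
    {K L : S.F} (h : S.le K L) {g : S.Pl K → ℝ} (hg : (support g).Finite) :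
    ∑ᶠ v, c K v * g v = ∑ᶠ w, c L w * g (S.overPl h w) := by
  have hfin : (support fun w => c L w * g (S.overPl h w)).Finite :=
    (hg.preimage' fun v _ => S.finiteFibers h v).subset <|
      (support_mul_subset_right _ _).trans (support_comp_eq_preimage g _).subset
  rw [finsum_eq_finsum_fiberwise (S.overPl h) hfin]
  refine finsum_congr fun v => ?_
  rw [hc h v, finsum_mul]
  refine finsum_congr fun w => ?_
  by_cases hw : S.overPl h w = v <;> simp [hw]

end PlaceSystem

theorem stmt_17_general (S : PlaceSystem) (c : ∀ K : S.F, S.Pl K → ℝ) (hc : S.Consistent c)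
    (μ : Set S.Y → ℝ)
    (hμc : ∀ (K : S.F) (v : S.Pl K), μ (S.Yset K v) = c K v)
    (f : S.Y → ℝ) (K : S.F) (val : S.Pl K → ℝ)
    (hval : ∀ v : S.Pl K, ∀ y ∈ S.Yset K v, f y = val v)
    (hsupp : ∀ y : S.Y, f y ≠ 0 → ∃ v : S.Pl K, y ∈ S.Yset K v)
    (hfin : {v : S.Pl K | val v ≠ 0}.Finite) :
    Function.support f ∈ S.ringR ∧
    (∑ᶠ v : S.Pl K, μ (S.Yset K v) * val v) = ∑ᶠ v : S.Pl K, c K v * val v ∧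
    (∀ (L : S.F) (h : S.le K L) (valL : S.Pl L → ℝ),
      (∀ w : S.Pl L, ∀ y ∈ S.Yset L w, f y = valL w) →
      (∑ᶠ v : S.Pl K, c K v * val v) = ∑ᶠ w : S.Pl L, c L w * valL w) := by
  refine ⟨?_, finsum_congr fun v => by rw [hμc], fun L h valL hvalL => ?_⟩
  · rw [PlaceSystem.support_eq_biUnion_Yset hval hsupp]
    exact S.biUnion_Yset_mem_ringR hfin
  · rw [PlaceSystem.eq_comp_overPl_of_eqOn_Yset h hval hvalL]
    exact hc.finsum_mul_comp_overPl h hfin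

/-- Let `c` be a consistent map and `μ` the induced charge on `R` (with `μ(Y(K,v)) = c(K,v)`).
Let `α` be an algebraic number modulo roots of unity, `K` a number field containing a
representative of `α`, and `f = f_α : Y → ℝ`, `f(y) = log‖α‖_y`, which is constant equal to
`val v = log‖α‖_v` on each basic set `Y(K,v)`, is supported in `⋃_v Y(K,v)` and vanishes on
all but finitely many of them.  Then the support of `f` belongs to `R`, the integral of the
`R`-simple function `f` against `μ`, namely `Σ_v μ(Y(K,v))·val v`, equals
`Φ_c(α) = Σ_{v ∈ M_K} c(K,v)·log‖α‖_v`, and this quantity does not depend on the chosen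
number field `K`. -/
theorem stmt_17 (S : PlaceSystem) (c : ∀ K : S.F, S.Pl K → ℝ) (hc : S.Consistent c)
    (μ : Set S.Y → ℝ) (hμ : S.IsCharge μ)
    (hμc : ∀ (K : S.F) (v : S.Pl K), μ (S.Yset K v) = c K v)
    (f : S.Y → ℝ) (K : S.F) (val : S.Pl K → ℝ)
    (hval : ∀ v : S.Pl K, ∀ y ∈ S.Yset K v, f y = val v)
    (hsupp : ∀ y : S.Y, f y ≠ 0 → ∃ v : S.Pl K, y ∈ S.Yset K v)
    (hfin : {v : S.Pl K | val v ≠ 0}.Finite) :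
    Function.support f ∈ S.ringR ∧
    (∑ᶠ v : S.Pl K, μ (S.Yset K v) * val v) = ∑ᶠ v : S.Pl K, c K v * val v ∧
    (∀ (L : S.F) (h : S.le K L) (valL : S.Pl L → ℝ),
      (∀ w : S.Pl L, ∀ y ∈ S.Yset L w, f y = valL w) →
      (∑ᶠ v : S.Pl K, c K v * val v) = ∑ᶠ w : S.Pl L, c L w * valL w) :=
  stmt_17_general S c hc μ hμc f K val hval hsupp hfin
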